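/- In the setting of the dgl (L₁, D) built from minimal Quillen models of 2-cones, for all A, B ∈ 𝕃(V) the derivations [[D, σ_A], σ_B] and (−1)^{|A|+1} σ_{[A,B]} agree on 𝕃(W₀). -/

import Mathlib

universe u

/-- A graded Lie algebra over `ℚ`: a `ℤ`-graded vector space with a bilinear bracket
satisfying graded antisymmetry and the graded Jacobi identity on homogeneous elements. -/
structure GLA (Lc : Type u) [AddCommGroup Lc] [Module ℚ Lc] where
  grade : ℤ → Submodule ℚ Lc
  internal : DirectSum.IsInternal grade
  br : Lc →ₗ[ℚ] Lc →ₗ[ℚ] Lc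
  br_mem : ∀ {i j : ℤ} {x y : Lc}, x ∈ grade i → y ∈ grade j → br x y ∈ grade (i + j)
  antisymm : ∀ {i j : ℤ} {x y : Lc}, x ∈ grade i → y ∈ grade j →
      br x y = -((-1 : ℚ) ^ (i * j) • br y x)
  jacobi : ∀ {i j : ℤ} {x y : Lc} (z : Lc), x ∈ grade i → y ∈ grade j →
      br x (br y z) = br (br x y) z + (-1 : ℚ) ^ (i * j) • br y (br x z)

namespace GLA

variable {Lc : Type u} [AddCommGroup Lc] [Module ℚ Lc]

/-- The Lie subalgebra (as a submodule closed under the bracket) generated by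
a graded family of subspaces. -/
def lieSub (G : GLA Lc) (p : ℤ → Submodule ℚ Lc) : Submodule ℚ Lc :=
  sInf {q | (∀ i, p i ≤ q) ∧ ∀ x ∈ q, ∀ y ∈ q, G.br x y ∈ q}

/-- The submodule of decomposable elements of `L`: the span of all brackets. -/
def dec (G : GLA Lc) : Submodule ℚ Lc :=
  Submodule.span ℚ {x : Lc | ∃ a b : Lc, x = G.br a b}

/-- A graded Lie algebra is reduced if it vanishes in degrees `≤ 0`. -/
def Reduced (G : GLA Lc) : Prop := ∀ i : ℤ, i ≤ 0 → G.grade i = ⊥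

end GLA

/-!
Both sides are derivations of degree `|A| + |B| + 1` (graded commutators of derivations are
derivations), so it suffices to compare them on the generators `w ∈ W₀` of `𝕃(W₀)`. On `𝕃(V)`
one has `σ_A = 0` and `σ_A σ_w = 0` (as `σ_w` sends `V` into the suspension generators, which
every `σ_A` kills), and `[D, σ_w] = -ad_w`: all three hold on generators, and the last one there
is the defining formula for `D(s(v ⊗ w))`. With these, both sides at `w` reduce to combinations
of `[σ_w A, B]` and `[σ_w B, A]`, and the remaining check is one of Koszul signs.
-/

lemma neg_one_zpow_add (p q : ℤ) : (-1 : ℚ) ^ (p + q) = (-1) ^ p * (-1) ^ q :=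
  zpow_add₀ (by norm_num) p q

lemma neg_one_zpow_congr {p q : ℤ} (k : ℤ) (h : p = q + 2 * k) : (-1 : ℚ) ^ p = (-1) ^ q := by
  rw [h, neg_one_zpow_add, (even_two_mul k).neg_one_zpow, mul_one]

lemma neg_one_zpow_mul_self (p : ℤ) : (-1 : ℚ) ^ p * (-1) ^ p = 1 := by
  rw [← neg_one_zpow_add, neg_one_zpow_congr p (q := 0) (by ring), zpow_zero]

lemma neg_neg_one_zpow (p : ℤ) : -(-1 : ℚ) ^ p = (-1) ^ (p + 1) := by
  rw [neg_one_zpow_add, zpow_one, mul_neg_one]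

namespace GLA

variable {Lc : Type u} [AddCommGroup Lc] [Module ℚ Lc] {G : GLA Lc} {p q : ℤ → Submodule ℚ Lc}

lemma lieSub_le {K : Submodule ℚ Lc} (hp : ∀ i, p i ≤ K)
    (hK : ∀ x ∈ K, ∀ y ∈ K, G.br x y ∈ K) : G.lieSub p ≤ K :=
  sInf_le ⟨hp, hK⟩

lemma le_lieSub (i : ℤ) : p i ≤ G.lieSub p :=
  fun _ hx => Submodule.mem_sInf.2 fun _ hK => hK.1 i hx

lemma br_mem_lieSub {x y : Lc} (hx : x ∈ G.lieSub p) (hy : y ∈ G.lieSub p) :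
    G.br x y ∈ G.lieSub p :=
  Submodule.mem_sInf.2 fun K hK =>
    hK.2 x (Submodule.mem_sInf.1 hx K hK) y (Submodule.mem_sInf.1 hy K hK)

lemma lieSub_mono (h : ∀ i, p i ≤ q i) : G.lieSub p ≤ G.lieSub q :=
  lieSub_le (fun i => (h i).trans (le_lieSub i)) fun _ hx _ hy => br_mem_lieSub hx hy

lemma lieSub_le_of_br_mem (hp : ∀ i, p i ≤ G.grade i) {K : Submodule ℚ Lc}
    (base : ∀ i, p i ≤ K)
    (step : ∀ {n : ℤ} {x y : Lc}, x ∈ G.grade n → x ∈ G.lieSub p → y ∈ G.lieSub p →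
      x ∈ K → y ∈ K → G.br x y ∈ K) :
    G.lieSub p ≤ K := by
  let H : Set Lc := {x | (∃ n, x ∈ G.grade n) ∧ x ∈ G.lieSub p ∧ x ∈ K}
  have hH : G.lieSub p ≤ Submodule.span ℚ H := by
    refine lieSub_le (fun i x hx =>
      Submodule.subset_span ⟨⟨i, hp i hx⟩, le_lieSub i hx, base i hx⟩) fun x hx y hy => ?_
    refine LinearMap.BilinMap.apply_apply_mem_of_mem_span _ H H G.br ?_ x y hx hy
    rintro x ⟨⟨n, hxn⟩, hxL, hxK⟩ y ⟨⟨m, hym⟩, hyL, hyK⟩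
    exact Submodule.subset_span
      ⟨⟨n + m, G.br_mem hxn hym⟩, br_mem_lieSub hxL hyL, step hxn hxL hyL hxK hyK⟩
  exact hH.trans (Submodule.span_le.2 fun _ hx => hx.2.2)

structure IsDerivation (G : GLA Lc) (s : ℤ) (f : Lc →ₗ[ℚ] Lc) : Prop where
  map_mem : ∀ {n : ℤ} {x : Lc}, x ∈ G.grade n → f x ∈ G.grade (n + s)
  map_br : ∀ {n : ℤ} (x y : Lc), x ∈ G.grade n →
    f (G.br x y) = G.br (f x) y + (-1 : ℚ) ^ (s * n) • G.br x (f y)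

def gradedBracket (s t : ℤ) (f g : Lc →ₗ[ℚ] Lc) : Lc →ₗ[ℚ] Lc :=
  f ∘ₗ g - (-1 : ℚ) ^ (s * t) • (g ∘ₗ f)

@[simp]
lemma gradedBracket_apply (s t : ℤ) (f g : Lc →ₗ[ℚ] Lc) (x : Lc) :
    gradedBracket s t f g x = f (g x) - (-1 : ℚ) ^ (s * t) • g (f x) :=
  rfl

namespace IsDerivation

variable {s t : ℤ} {f g : Lc →ₗ[ℚ] Lc}

lemma sub (hf : G.IsDerivation s f) (hg : G.IsDerivation s g) : G.IsDerivation s (f - g) where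
  map_mem hx := Submodule.sub_mem _ (hf.map_mem hx) (hg.map_mem hx)
  map_br x y hx := by
    simp only [LinearMap.sub_apply, hf.map_br x y hx, hg.map_br x y hx, map_sub, smul_sub]
    abel

lemma smul (c : ℚ) (hf : G.IsDerivation s f) : G.IsDerivation s (c • f) where
  map_mem hx := Submodule.smul_mem _ c (hf.map_mem hx)
  map_br x y hx := by
    simp only [LinearMap.smul_apply, hf.map_br x y hx, map_smul, smul_add, smul_comm c]

lemma gradedBracket {u : ℤ} (hf : G.IsDerivation s f) (hg : G.IsDerivation t g)
    (hu : s + t = u) : G.IsDerivation u (gradedBracket s t f g) where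
  map_mem {n x} hx := by
    have hfg := hf.map_mem (hg.map_mem hx)
    have hgf := hg.map_mem (hf.map_mem hx)
    rw [add_assoc, add_comm t, hu] at hfg
    rw [add_assoc, hu] at hgf
    exact Submodule.sub_mem _ hfg (Submodule.smul_mem _ _ hgf)
  map_br {n} x y hx := by
    have hs : (-1 : ℚ) ^ (s * (n + t)) = (-1) ^ (s * t) * (-1) ^ (s * n) := by
      rw [← neg_one_zpow_add]; ring_nf
    have ht : (-1 : ℚ) ^ (t * (n + s)) = (-1) ^ (s * t) * (-1) ^ (t * n) := by
      rw [← neg_one_zpow_add]; ring_nf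
    have hun : (-1 : ℚ) ^ (u * n) = (-1) ^ (s * n) * (-1) ^ (t * n) := by
      rw [← hu, ← neg_one_zpow_add]; ring_nf
    have hsq := neg_one_zpow_mul_self (s * t)
    simp only [gradedBracket_apply, hg.map_br x y hx, hf.map_br x y hx, map_add, map_smul,
      hf.map_br _ y (hg.map_mem hx), hf.map_br x _ hx, hg.map_br _ y (hf.map_mem hx),
      hg.map_br x _ hx, hs, ht, hun, map_sub, LinearMap.sub_apply, LinearMap.smul_apply]
    match_scalars <;> grind

lemma eq_zero_of_mem_lieSub (hp : ∀ i, p i ≤ G.grade i) (hf : G.IsDerivation s f)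
    (h : ∀ i, ∀ v ∈ p i, f v = 0) : ∀ x ∈ G.lieSub p, f x = 0 := by
  refine fun x hx => lieSub_le_of_br_mem (K := LinearMap.ker f) hp (fun i v hv => h i v hv)
    (fun {n x y} hx _ _ hfx hfy => ?_) hx
  rw [LinearMap.mem_ker] at hfx hfy ⊢
  simp [hf.map_br x y hx, hfx, hfy]

lemma eqOn_lieSub (hp : ∀ i, p i ≤ G.grade i) (hf : G.IsDerivation s f)
    (hg : G.IsDerivation s g) (h : ∀ i, ∀ v ∈ p i, f v = g v) :
    ∀ x ∈ G.lieSub p, f x = g x := fun x hx =>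
  sub_eq_zero.1 <| (hf.sub hg).eq_zero_of_mem_lieSub hp
    (fun i v hv => sub_eq_zero.2 (h i v hv)) x hx

lemma map_mem_lieSub (hp : ∀ i, p i ≤ G.grade i) (hf : G.IsDerivation s f)
    (h : ∀ i, ∀ v ∈ p i, f v ∈ G.lieSub p) : ∀ x ∈ G.lieSub p, f x ∈ G.lieSub p := by
  refine fun x hx => lieSub_le_of_br_mem (K := (G.lieSub p).comap f) hp h
    (fun {n x y} hx hxL hyL hfx hfy => ?_) hx
  rw [Submodule.mem_comap, hf.map_br x y hx]
  exact add_mem (br_mem_lieSub hfx hyL) (Submodule.smul_mem _ _ (br_mem_lieSub hxL hfy))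

lemma comp_eq_zero_of_mem_lieSub (hp : ∀ i, p i ≤ G.grade i) (hf : G.IsDerivation s f)
    (hg : G.IsDerivation t g) (hf0 : ∀ x ∈ G.lieSub p, f x = 0)
    (h : ∀ i, ∀ v ∈ p i, f (g v) = 0) : ∀ x ∈ G.lieSub p, f (g x) = 0 := by
  have hfg := (hf.gradedBracket hg rfl).eq_zero_of_mem_lieSub hp fun i v hv => by
    simp [h i v hv, hf0 v (le_lieSub i hv)]
  intro x hx
  simpa [hf0 x hx] using hfg x hx

end IsDerivation

lemma isDerivation_br {j : ℤ} {w : Lc} (hw : w ∈ G.grade j) : G.IsDerivation j (G.br w) where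
  map_mem {n x} hx := by rw [add_comm]; exact G.br_mem hw hx
  map_br x y hx := G.jacobi y hw hx

/-- The hypotheses on `(L₁, D)` that the argument uses. Here `V0 i ⊔ V1 i` generates `𝕃(V)`,
`S` is a subspace of `𝕃(V ⊕ W)` on which `sg a A = σ_A` is defined for `A` of degree `a`,
and `sus v w = s(v ⊗ w)`. -/
structure IsTwoConeModel (G : GLA Lc) (V0 V1 W0 Sp : ℤ → Submodule ℚ Lc) (S : Submodule ℚ Lc)
    (sus : Lc →ₗ[ℚ] Lc →ₗ[ℚ] Lc) (sg : ℤ → Lc → Lc →ₗ[ℚ] Lc) (D : Lc →ₗ[ℚ] Lc) : Prop where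
  V0_le_grade : ∀ i, V0 i ≤ G.grade i
  V1_le_grade : ∀ i, V1 i ≤ G.grade i
  W0_le_grade : ∀ i, W0 i ≤ G.grade i
  lieSub_V_le : G.lieSub (fun i => V0 i ⊔ V1 i) ≤ S
  W0_le : ∀ i, W0 i ≤ S
  sus_mem_of_V0 : ∀ {i j : ℤ} {v w : Lc}, v ∈ V0 i → w ∈ W0 j → sus v w ∈ Sp (i + j + 1)
  sus_mem_of_V1 : ∀ {i j : ℤ} {v w : Lc}, v ∈ V1 i → w ∈ W0 j → sus v w ∈ Sp (i + j + 1)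
  isDerivation_sg : ∀ {a : ℤ} {A : Lc}, A ∈ S → A ∈ G.grade a →
    G.IsDerivation (a + 1) (sg a A)
  sg_V_apply_V : ∀ {i i' : ℤ} {v v' : Lc}, v ∈ V0 i ⊔ V1 i → v' ∈ V0 i' ⊔ V1 i' →
    sg i v v' = 0
  sg_W0_apply_V : ∀ {i j : ℤ} {v w : Lc}, v ∈ V0 i ⊔ V1 i → w ∈ W0 j →
    sg j w v = (-1 : ℚ) ^ (i * j) • sus v w
  sg_apply_V : ∀ {a : ℤ} {A : Lc}, A ∈ S → A ∈ G.grade a → ∀ {i : ℤ} {v : Lc},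
    v ∈ V0 i ⊔ V1 i → sg a A v = (-1 : ℚ) ^ (i * a) • sg i v A
  sg_apply_W0 : ∀ {a : ℤ} {A : Lc}, A ∈ S → A ∈ G.grade a → ∀ {j : ℤ} {w : Lc},
    w ∈ W0 j → sg a A w = (-1 : ℚ) ^ (j * a) • sg j w A
  sg_apply_Sp : ∀ {a : ℤ} {A : Lc}, A ∈ S → A ∈ G.grade a → ∀ {k : ℤ} {x : Lc},
    x ∈ Sp k → sg a A x = 0
  isDerivation_D : G.IsDerivation (-1) D
  D_V0 : ∀ {i : ℤ} {v : Lc}, v ∈ V0 i → D v = 0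
  D_W0 : ∀ {j : ℤ} {w : Lc}, w ∈ W0 j → D w = 0
  D_V1 : ∀ {i : ℤ} {v : Lc}, v ∈ V1 i → D v ∈ G.lieSub V0
  D_sus_of_V0 : ∀ {i j : ℤ} {v w : Lc}, v ∈ V0 i → w ∈ W0 j → D (sus v w) = G.br v w
  D_sus_of_V1 : ∀ {i j : ℤ} {v w : Lc}, v ∈ V1 i → w ∈ W0 j →
    D (sus v w) = G.br v w - (-1 : ℚ) ^ ((i + 1) * j) • sg j w (D v)

namespace IsTwoConeModel

variable {V0 V1 W0 Sp : ℤ → Submodule ℚ Lc} {S : Submodule ℚ Lc}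
  {sus : Lc →ₗ[ℚ] Lc →ₗ[ℚ] Lc} {sg : ℤ → Lc → Lc →ₗ[ℚ] Lc} {D : Lc →ₗ[ℚ] Lc}

local notation "𝕃V" => G.lieSub (fun i => V0 i ⊔ V1 i)

lemma V_le_grade (M : G.IsTwoConeModel V0 V1 W0 Sp S sus sg D) (i : ℤ) :
    V0 i ⊔ V1 i ≤ G.grade i :=
  sup_le (M.V0_le_grade i) (M.V1_le_grade i)

lemma sg_eq_zero_of_mem_lieSub (M : G.IsTwoConeModel V0 V1 W0 Sp S sus sg D) {c : ℤ} {C : Lc}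
    (hC : C ∈ 𝕃V) (hc : C ∈ G.grade c) : ∀ X ∈ 𝕃V, sg c C X = 0 := by
  have hgen : ∀ i, ∀ v ∈ V0 i ⊔ V1 i, ∀ X ∈ 𝕃V, sg i v X = 0 := fun i v hv =>
    (M.isDerivation_sg (M.lieSub_V_le (le_lieSub i hv)) (M.V_le_grade i hv)).eq_zero_of_mem_lieSub
      M.V_le_grade fun _ _ hv' => M.sg_V_apply_V hv hv'
  refine (M.isDerivation_sg (M.lieSub_V_le hC) hc).eq_zero_of_mem_lieSub M.V_le_grade
    fun i v hv => ?_
  rw [M.sg_apply_V (M.lieSub_V_le hC) hc hv, hgen i v hv C hC, smul_zero]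

lemma D_mem_lieSub (M : G.IsTwoConeModel V0 V1 W0 Sp S sus sg D) : ∀ X ∈ 𝕃V, D X ∈ 𝕃V := by
  refine M.isDerivation_D.map_mem_lieSub M.V_le_grade fun i v hv => ?_
  obtain ⟨v0, hv0, v1, hv1, rfl⟩ := Submodule.mem_sup.1 hv
  rw [map_add, M.D_V0 hv0, zero_add]
  exact lieSub_mono (fun _ => le_sup_left) (M.D_V1 hv1)

lemma sg_comp_sg_eq_zero (M : G.IsTwoConeModel V0 V1 W0 Sp S sus sg D) {c : ℤ} {C : Lc}
    (hC : C ∈ 𝕃V) (hc : C ∈ G.grade c) {j : ℤ} {w : Lc} (hw : w ∈ W0 j) :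
    ∀ X ∈ 𝕃V, sg c C (sg j w X) = 0 := by
  have hCS := M.lieSub_V_le hC
  refine (M.isDerivation_sg hCS hc).comp_eq_zero_of_mem_lieSub M.V_le_grade
    (M.isDerivation_sg (M.W0_le j hw) (M.W0_le_grade j hw))
    (M.sg_eq_zero_of_mem_lieSub hC hc) fun i v hv => ?_
  obtain ⟨v0, hv0, v1, hv1, rfl⟩ := Submodule.mem_sup.1 hv
  rw [map_add, M.sg_W0_apply_V (Submodule.mem_sup_left hv0) hw,
    M.sg_W0_apply_V (Submodule.mem_sup_right hv1) hw, map_add, map_smul, map_smul,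
    M.sg_apply_Sp hCS hc (M.sus_mem_of_V0 hv0 hw), M.sg_apply_Sp hCS hc (M.sus_mem_of_V1 hv1 hw),
    smul_zero, add_zero]

lemma gradedBracket_D_sg_W0 (M : G.IsTwoConeModel V0 V1 W0 Sp S sus sg D) {j : ℤ} {w : Lc}
    (hw : w ∈ W0 j) : ∀ X ∈ 𝕃V, gradedBracket (-1) (j + 1) D (sg j w) X = -G.br w X := by
  have hwj := M.W0_le_grade j hw
  have hσ := M.isDerivation_sg (M.W0_le j hw) hwj
  have hV0 : ∀ {i v}, v ∈ V0 i → gradedBracket (-1) (j + 1) D (sg j w) v = -G.br w v :=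
    fun {i v} hv => by
      rw [gradedBracket_apply, M.sg_W0_apply_V (Submodule.mem_sup_left hv) hw, M.D_V0 hv,
        map_zero, smul_zero, sub_zero, map_smul, M.D_sus_of_V0 hv hw,
        G.antisymm hwj (M.V0_le_grade i hv), neg_neg, mul_comm]
  have hV1 : ∀ {i v}, v ∈ V1 i → gradedBracket (-1) (j + 1) D (sg j w) v = -G.br w v :=
    fun {i v} hv => by
      have hsign : (-1 : ℚ) ^ (i * j) * (-1) ^ ((i + 1) * j) = -(-1) ^ (-1 * (j + 1)) := by
        rw [← neg_one_zpow_add, neg_neg_one_zpow]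
        exact neg_one_zpow_congr (i * j + j) (by ring)
      rw [gradedBracket_apply, M.sg_W0_apply_V (Submodule.mem_sup_right hv) hw, map_smul,
        M.D_sus_of_V1 hv hw, G.antisymm hwj (M.V1_le_grade i hv), neg_neg, smul_sub, smul_smul,
        hsign, mul_comm j]
      module
  refine (M.isDerivation_D.gradedBracket hσ (by ring)).eqOn_lieSub (g := -G.br w)
    M.V_le_grade (by simpa using (isDerivation_br hwj).smul (-1)) fun i v hv => ?_
  obtain ⟨v0, hv0, v1, hv1, rfl⟩ := Submodule.mem_sup.1 hv
  rw [map_add, LinearMap.neg_apply, map_add, neg_add, ← hV0 hv0, ← hV1 hv1]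

lemma sg_D_sg_W0 (M : G.IsTwoConeModel V0 V1 W0 Sp S sus sg D) {c : ℤ} {C : Lc}
    (hC : C ∈ 𝕃V) (hc : C ∈ G.grade c) {j : ℤ} {w : Lc} (hw : w ∈ W0 j) {X : Lc}
    (hX : X ∈ 𝕃V) : sg c C (D (sg j w X)) = -((-1 : ℚ) ^ (j * c) • G.br (sg j w C) X) := by
  have hCS := M.lieSub_V_le hC
  have h := M.gradedBracket_D_sg_W0 hw X hX
  rw [gradedBracket_apply] at h
  rw [eq_add_of_sub_eq' h, map_add, map_smul,
    M.sg_comp_sg_eq_zero hC hc hw _ (M.D_mem_lieSub X hX), smul_zero, zero_add, map_neg,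
    (M.isDerivation_sg hCS hc).map_br w X (M.W0_le_grade j hw),
    M.sg_eq_zero_of_mem_lieSub hC hc X hX, map_zero, smul_zero, add_zero,
    M.sg_apply_W0 hCS hc hw, map_smul, LinearMap.smul_apply]

lemma gradedBracket_apply_W0 (M : G.IsTwoConeModel V0 V1 W0 Sp S sus sg D)
    {a : ℤ} {A : Lc} (hA : A ∈ 𝕃V) (ha : A ∈ G.grade a)
    {b : ℤ} {B : Lc} (hB : B ∈ 𝕃V) (hb : B ∈ G.grade b) {j : ℤ} {w : Lc} (hw : w ∈ W0 j) :
    gradedBracket a (b + 1) (gradedBracket (-1) (a + 1) D (sg a A)) (sg b B) w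
      = (-1 : ℚ) ^ (a + 1) • sg (a + b) (G.br A B) w := by
  have hwj := M.W0_le_grade j hw
  have hAS := M.lieSub_V_le hA
  have hBS := M.lieSub_V_le hB
  have hσw := M.isDerivation_sg (M.W0_le j hw) hwj
  have hABS := M.lieSub_V_le (br_mem_lieSub hA hB)
  simp only [gradedBracket_apply, M.D_W0 hw, map_zero, smul_zero, sub_zero,
    M.sg_apply_W0 hBS hb hw, M.sg_apply_W0 hAS ha hw, map_smul,
    M.sg_comp_sg_eq_zero hA ha hw B hB, M.sg_D_sg_W0 hA ha hw hB, M.sg_D_sg_W0 hB hb hw hA,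
    M.sg_apply_W0 hABS (G.br_mem ha hb) hw, hσw.map_br A B ha,
    G.antisymm ha (hσw.map_mem hb)]
  match_scalars
  · simp only [mul_neg, neg_mul, neg_neg, mul_one, ← neg_one_zpow_add]
    exact neg_one_zpow_congr (-(a + 1)) (by ring)
  · simp only [mul_one, neg_neg_one_zpow, ← neg_one_zpow_add]
    exact neg_one_zpow_congr (-(a + j * a)) (by ring)

lemma gradedBracket_apply_lieSub_W0 (M : G.IsTwoConeModel V0 V1 W0 Sp S sus sg D)
    {a : ℤ} {A : Lc} (hA : A ∈ 𝕃V) (ha : A ∈ G.grade a)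
    {b : ℤ} {B : Lc} (hB : B ∈ 𝕃V) (hb : B ∈ G.grade b) :
    ∀ T ∈ G.lieSub W0, gradedBracket a (b + 1) (gradedBracket (-1) (a + 1) D (sg a A)) (sg b B) T
      = (-1 : ℚ) ^ (a + 1) • sg (a + b) (G.br A B) T :=
  have hDA := M.isDerivation_D.gradedBracket (M.isDerivation_sg (M.lieSub_V_le hA) ha) (by ring)
  (hDA.gradedBracket (M.isDerivation_sg (M.lieSub_V_le hB) hb) (by ring)).eqOn_lieSub
    M.W0_le_grade
    ((M.isDerivation_sg (M.lieSub_V_le (br_mem_lieSub hA hB)) (G.br_mem ha hb)).smul _)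
    fun _ _ hw => M.gradedBracket_apply_W0 hA ha hB hb hw

end IsTwoConeModel

end GLA

theorem statement8_general
    {Lc : Type u} [AddCommGroup Lc] [Module ℚ Lc] (G : GLA Lc)
    (V0 V1 W0 W1 Sp : ℤ → Submodule ℚ Lc)
    (hV0 : ∀ i, V0 i ≤ G.grade i) (hV1 : ∀ i, V1 i ≤ G.grade i)
    (hW0 : ∀ i, W0 i ≤ G.grade i)
    -- the suspension `s(v ⊗ w)`, bilinear, of degree `|v|+|w|+1`; in `L₁` only
    -- `s(V₀⊗W₀) ⊕ s(V₁⊗W₀) ⊕ s(V₀⊗W₁)` is present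
    (sus : Lc →ₗ[ℚ] Lc →ₗ[ℚ] Lc)
    (hsus00 : ∀ {i j : ℤ} {v w : Lc}, v ∈ V0 i → w ∈ W0 j → sus v w ∈ Sp (i + j + 1))
    (hsus10 : ∀ {i j : ℤ} {v w : Lc}, v ∈ V1 i → w ∈ W0 j → sus v w ∈ Sp (i + j + 1))
    -- the derivations `σ_A` for homogeneous `A ∈ 𝕃(V ⊕ W)`
    (sg : ℤ → Lc → (Lc →ₗ[ℚ] Lc))
    (hsg_grade : ∀ {a : ℤ} {A : Lc}, A ∈ G.lieSub (fun i => V0 i ⊔ V1 i ⊔ W0 i ⊔ W1 i) →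
      A ∈ G.grade a → ∀ {n : ℤ} {x : Lc}, x ∈ G.grade n → sg a A x ∈ G.grade (n + a + 1))
    (hsg_der : ∀ {a : ℤ} {A : Lc}, A ∈ G.lieSub (fun i => V0 i ⊔ V1 i ⊔ W0 i ⊔ W1 i) →
      A ∈ G.grade a → ∀ {n : ℤ} (x y : Lc), x ∈ G.grade n →
      sg a A (G.br x y) = G.br (sg a A x) y + (-1 : ℚ) ^ ((a + 1) * n) • G.br x (sg a A y))
    (hsg_wv : ∀ {i j : ℤ} {v w : Lc}, v ∈ V0 i ⊔ V1 i → w ∈ W0 j →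
      sg j w v = (-1 : ℚ) ^ (i * j) • sus v w)
    (hsg_vv : ∀ {i i' : ℤ} {v v' : Lc}, v ∈ V0 i ⊔ V1 i → v' ∈ V0 i' ⊔ V1 i' →
      sg i v v' = 0)
    (hsg_Av : ∀ {a : ℤ} {A : Lc}, A ∈ G.lieSub (fun i => V0 i ⊔ V1 i ⊔ W0 i ⊔ W1 i) →
      A ∈ G.grade a → ∀ {i : ℤ} {v : Lc}, v ∈ V0 i ⊔ V1 i →
      sg a A v = (-1 : ℚ) ^ (i * a) • sg i v A)
    (hsg_Aw : ∀ {a : ℤ} {A : Lc}, A ∈ G.lieSub (fun i => V0 i ⊔ V1 i ⊔ W0 i ⊔ W1 i) →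
      A ∈ G.grade a → ∀ {j : ℤ} {w : Lc}, w ∈ W0 j ⊔ W1 j →
      sg a A w = (-1 : ℚ) ^ (j * a) • sg j w A)
    (hsg_AS : ∀ {a : ℤ} {A : Lc}, A ∈ G.lieSub (fun i => V0 i ⊔ V1 i ⊔ W0 i ⊔ W1 i) →
      A ∈ G.grade a → ∀ {k : ℤ} {x : Lc}, x ∈ Sp k → sg a A x = 0)
    -- the degree `-1` derivation `D` of `L₁`
    (D : Lc →ₗ[ℚ] Lc)
    (hD_grade : ∀ {i : ℤ} {x : Lc}, x ∈ G.grade i → D x ∈ G.grade (i - 1))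
    (hD_der : ∀ {i : ℤ} (x y : Lc), x ∈ G.grade i →
      D (G.br x y) = G.br (D x) y + (-1 : ℚ) ^ ((-1 : ℤ) * i) • G.br x (D y))
    -- `D = ∂_V` on `V`, `D = ∂_W` on `W`, with `∂(V₀) = ∂(W₀) = 0`,
    -- `∂(V₁) ⊆ 𝕃(V₀)` and `∂(W₁) ⊆ 𝕃(W₀)`
    (hD_V0 : ∀ {i : ℤ} {v : Lc}, v ∈ V0 i → D v = 0)
    (hD_W0 : ∀ {j : ℤ} {w : Lc}, w ∈ W0 j → D w = 0)
    (hD_V1 : ∀ {i : ℤ} {v : Lc}, v ∈ V1 i → D v ∈ G.lieSub V0)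
    -- the value of `D` on the suspension generators
    (hD_sus00 : ∀ {i j : ℤ} {v w : Lc}, v ∈ V0 i → w ∈ W0 j → D (sus v w) = G.br v w)
    (hD_sus10 : ∀ {i j : ℤ} {v w : Lc}, v ∈ V1 i → w ∈ W0 j →
      D (sus v w) = G.br v w - (-1 : ℚ) ^ ((i + 1) * j) • sg j w (D v))
 :
    ∀ {a : ℤ} {A : Lc}, A ∈ G.lieSub (fun i => V0 i ⊔ V1 i) → A ∈ G.grade a →
    ∀ {b : ℤ} {B : Lc}, B ∈ G.lieSub (fun i => V0 i ⊔ V1 i) → B ∈ G.grade b →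
    ∀ {T : Lc}, T ∈ G.lieSub W0 →
      D (sg a A (sg b B T)) - (-1 : ℚ) ^ (a + 1) • sg a A (D (sg b B T))
        - (-1 : ℚ) ^ (a * (b + 1)) •
            (sg b B (D (sg a A T)) - (-1 : ℚ) ^ (a + 1) • sg b B (sg a A (D T)))
      = (-1 : ℚ) ^ (a + 1) • sg (a + b) (G.br A B) T := by
  intro a A hA ha b B hB hb T hT
  have M : G.IsTwoConeModel V0 V1 W0 Sp (G.lieSub fun i => V0 i ⊔ V1 i ⊔ W0 i ⊔ W1 i)
      sus sg D :=
    { V0_le_grade := hV0, V1_le_grade := hV1, W0_le_grade := hW0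
      lieSub_V_le := GLA.lieSub_mono fun _ => le_sup_left.trans le_sup_left
      W0_le := fun i _ hw => GLA.le_lieSub i (Submodule.mem_sup_left (Submodule.mem_sup_right hw))
      sus_mem_of_V0 := hsus00, sus_mem_of_V1 := hsus10
      isDerivation_sg := fun hA ha =>
        ⟨fun hx => by rw [← add_assoc]; exact hsg_grade hA ha hx, hsg_der hA ha⟩
      sg_V_apply_V := hsg_vv, sg_W0_apply_V := hsg_wv, sg_apply_V := hsg_Av
      sg_apply_W0 := fun hA ha _ _ hw => hsg_Aw hA ha (Submodule.mem_sup_left hw)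
      sg_apply_Sp := hsg_AS
      isDerivation_D := ⟨fun hx => by rw [← sub_eq_add_neg]; exact hD_grade hx, hD_der⟩
      D_V0 := hD_V0, D_W0 := hD_W0, D_V1 := hD_V1
      D_sus_of_V0 := hD_sus00, D_sus_of_V1 := hD_sus10 }
  have h := M.gradedBracket_apply_lieSub_W0 hA ha hB hb T hT
  simpa only [GLA.gradedBracket_apply, map_sub, map_smul,
    neg_one_zpow_congr (-(a + 1)) (show -1 * (a + 1) = a + 1 + 2 * -(a + 1) by ring)] using h

/-- first part of Lemma 3.7.  In the dgl `(L₁, D)` built from minimal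
Quillen models of 2-cones, for all homogeneous `A, B ∈ 𝕃(V)` the derivations
`[[D, σ_A], σ_B]` and `(-1)^{|A|+1} σ_{[A,B]}` agree on `𝕃(W₀)`. -/
theorem statement8
    {Lc : Type u} [AddCommGroup Lc] [Module ℚ Lc] (G : GLA Lc)
    (V0 V1 W0 W1 Sp : ℤ → Submodule ℚ Lc)
    -- the ambient free Lie algebra is reduced
    (hred : G.Reduced)
    (hV0 : ∀ i, V0 i ≤ G.grade i) (hV1 : ∀ i, V1 i ≤ G.grade i)
    (hW0 : ∀ i, W0 i ≤ G.grade i) (hW1 : ∀ i, W1 i ≤ G.grade i)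
    (hSp : ∀ i, Sp i ≤ G.grade i)
    -- the suspension `s(v ⊗ w)`, bilinear, of degree `|v|+|w|+1`; in `L₁` only
    -- `s(V₀⊗W₀) ⊕ s(V₁⊗W₀) ⊕ s(V₀⊗W₁)` is present
    (sus : Lc →ₗ[ℚ] Lc →ₗ[ℚ] Lc)
    (hsus00 : ∀ {i j : ℤ} {v w : Lc}, v ∈ V0 i → w ∈ W0 j → sus v w ∈ Sp (i + j + 1))
    (hsus10 : ∀ {i j : ℤ} {v w : Lc}, v ∈ V1 i → w ∈ W0 j → sus v w ∈ Sp (i + j + 1))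
    (hsus01 : ∀ {i j : ℤ} {v w : Lc}, v ∈ V0 i → w ∈ W1 j → sus v w ∈ Sp (i + j + 1))
    -- `L₁` is generated by `V ⊕ W ⊕ s(V₀⊗W₀) ⊕ s(V₁⊗W₀) ⊕ s(V₀⊗W₁)`
    (hgen : G.lieSub (fun i => V0 i ⊔ V1 i ⊔ W0 i ⊔ W1 i ⊔ Sp i) = ⊤)
    -- the derivations `σ_A` for homogeneous `A ∈ 𝕃(V ⊕ W)`
    (sg : ℤ → Lc → (Lc →ₗ[ℚ] Lc))
    (hsg_grade : ∀ {a : ℤ} {A : Lc}, A ∈ G.lieSub (fun i => V0 i ⊔ V1 i ⊔ W0 i ⊔ W1 i) →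
      A ∈ G.grade a → ∀ {n : ℤ} {x : Lc}, x ∈ G.grade n → sg a A x ∈ G.grade (n + a + 1))
    (hsg_der : ∀ {a : ℤ} {A : Lc}, A ∈ G.lieSub (fun i => V0 i ⊔ V1 i ⊔ W0 i ⊔ W1 i) →
      A ∈ G.grade a → ∀ {n : ℤ} (x y : Lc), x ∈ G.grade n →
      sg a A (G.br x y) = G.br (sg a A x) y + (-1 : ℚ) ^ ((a + 1) * n) • G.br x (sg a A y))
    (hsg_vw : ∀ {i j : ℤ} {v w : Lc}, v ∈ V0 i ⊔ V1 i → w ∈ W0 j → sg i v w = sus v w)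
    (hsg_vw' : ∀ {i j : ℤ} {v w : Lc}, v ∈ V0 i → w ∈ W1 j → sg i v w = sus v w)
    (hsg_wv : ∀ {i j : ℤ} {v w : Lc}, v ∈ V0 i ⊔ V1 i → w ∈ W0 j →
      sg j w v = (-1 : ℚ) ^ (i * j) • sus v w)
    (hsg_wv' : ∀ {i j : ℤ} {v w : Lc}, v ∈ V0 i → w ∈ W1 j →
      sg j w v = (-1 : ℚ) ^ (i * j) • sus v w)
    (hsg_vv : ∀ {i i' : ℤ} {v v' : Lc}, v ∈ V0 i ⊔ V1 i → v' ∈ V0 i' ⊔ V1 i' →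
      sg i v v' = 0)
    (hsg_ww : ∀ {j j' : ℤ} {w w' : Lc}, w ∈ W0 j ⊔ W1 j → w' ∈ W0 j' ⊔ W1 j' →
      sg j w w' = 0)
    (hsg_vS : ∀ {i k : ℤ} {v x : Lc}, v ∈ V0 i ⊔ V1 i → x ∈ Sp k → sg i v x = 0)
    (hsg_wS : ∀ {j k : ℤ} {w x : Lc}, w ∈ W0 j ⊔ W1 j → x ∈ Sp k → sg j w x = 0)
    (hsg_Av : ∀ {a : ℤ} {A : Lc}, A ∈ G.lieSub (fun i => V0 i ⊔ V1 i ⊔ W0 i ⊔ W1 i) →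
      A ∈ G.grade a → ∀ {i : ℤ} {v : Lc}, v ∈ V0 i ⊔ V1 i →
      sg a A v = (-1 : ℚ) ^ (i * a) • sg i v A)
    (hsg_Aw : ∀ {a : ℤ} {A : Lc}, A ∈ G.lieSub (fun i => V0 i ⊔ V1 i ⊔ W0 i ⊔ W1 i) →
      A ∈ G.grade a → ∀ {j : ℤ} {w : Lc}, w ∈ W0 j ⊔ W1 j →
      sg a A w = (-1 : ℚ) ^ (j * a) • sg j w A)
    (hsg_AS : ∀ {a : ℤ} {A : Lc}, A ∈ G.lieSub (fun i => V0 i ⊔ V1 i ⊔ W0 i ⊔ W1 i) →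
      A ∈ G.grade a → ∀ {k : ℤ} {x : Lc}, x ∈ Sp k → sg a A x = 0)
    -- the degree `-1` derivation `D` of `L₁`
    (D : Lc →ₗ[ℚ] Lc)
    (hD_grade : ∀ {i : ℤ} {x : Lc}, x ∈ G.grade i → D x ∈ G.grade (i - 1))
    (hD_der : ∀ {i : ℤ} (x y : Lc), x ∈ G.grade i →
      D (G.br x y) = G.br (D x) y + (-1 : ℚ) ^ ((-1 : ℤ) * i) • G.br x (D y))
    -- `D = ∂_V` on `V`, `D = ∂_W` on `W`, with `∂(V₀) = ∂(W₀) = 0`,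
    -- `∂(V₁) ⊆ 𝕃(V₀)` and `∂(W₁) ⊆ 𝕃(W₀)`
    (hD_V0 : ∀ {i : ℤ} {v : Lc}, v ∈ V0 i → D v = 0)
    (hD_W0 : ∀ {j : ℤ} {w : Lc}, w ∈ W0 j → D w = 0)
    (hD_V1 : ∀ {i : ℤ} {v : Lc}, v ∈ V1 i → D v ∈ G.lieSub V0)
    (hD_W1 : ∀ {j : ℤ} {w : Lc}, w ∈ W1 j → D w ∈ G.lieSub W0)
    -- minimality of the two Quillen models
    (hD_V1dec : ∀ {i : ℤ} {v : Lc}, v ∈ V1 i → D v ∈ G.dec)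
    (hD_W1dec : ∀ {j : ℤ} {w : Lc}, w ∈ W1 j → D w ∈ G.dec)
    -- the value of `D` on the suspension generators
    (hD_sus00 : ∀ {i j : ℤ} {v w : Lc}, v ∈ V0 i → w ∈ W0 j → D (sus v w) = G.br v w)
    (hD_sus10 : ∀ {i j : ℤ} {v w : Lc}, v ∈ V1 i → w ∈ W0 j →
      D (sus v w) = G.br v w - (-1 : ℚ) ^ ((i + 1) * j) • sg j w (D v))
    (hD_sus01 : ∀ {i j : ℤ} {v w : Lc}, v ∈ V0 i → w ∈ W1 j →
      D (sus v w) = G.br v w - (-1 : ℚ) ^ i • sg i v (D w))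
    -- `(L₁, D)` is a dgl
    (hDD : ∀ x : Lc, D (D x) = 0)
 :
    ∀ {a : ℤ} {A : Lc}, A ∈ G.lieSub (fun i => V0 i ⊔ V1 i) → A ∈ G.grade a →
    ∀ {b : ℤ} {B : Lc}, B ∈ G.lieSub (fun i => V0 i ⊔ V1 i) → B ∈ G.grade b →
    ∀ {T : Lc}, T ∈ G.lieSub W0 →
      D (sg a A (sg b B T)) - (-1 : ℚ) ^ (a + 1) • sg a A (D (sg b B T))
        - (-1 : ℚ) ^ (a * (b + 1)) •
            (sg b B (D (sg a A T)) - (-1 : ℚ) ^ (a + 1) • sg b B (sg a A (D T)))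
      = (-1 : ℚ) ^ (a + 1) • sg (a + b) (G.br A B) T :=
  statement8_general G V0 V1 W0 W1 Sp hV0 hV1 hW0 sus hsus00 hsus10 sg hsg_grade hsg_der hsg_wv
    hsg_vv hsg_Av hsg_Aw hsg_AS D hD_grade hD_der hD_V0 hD_W0 hD_V1 hD_sus00 hD_sus10
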